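/- arXiv:1503.01628 — 2 statements merged into one kernel-verified Lean document; each statement's English description precedes it below -/
import Mathlib

section
/- If G is a canonically prime bipartite graph and φ is an induced-subgraph embedding of G into the Z-grid Z_{n,k}, then the set of columns of Z_{n,k} containing at least one vertex of φ(G) is a set of consecutive integers. -/
def Zrel (i j i' j' : ℕ) : Prop :=
  (Odd i ∧ i' = i + 1 ∧ j' < j) ∨
  (Even i ∧ i' = i + 1 ∧ j ≤ j') ∨
  (Even i ∧ Odd i' ∧ i + 3 ≤ i')

def Zgrid (n k : ℕ) : SimpleGraph (Fin n × Fin k) :=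
  SimpleGraph.fromRel (fun u v =>
    Zrel (u.1.val + 1) (u.2.val + 1) (v.1.val + 1) (v.2.val + 1))

def IsCanonicalSplit {V : Type*} (G : SimpleGraph V) (P : V → Bool)
    (A : Set V) : Prop :=
  A.Nonempty ∧ Aᶜ.Nonempty ∧
  ((∀ a ∈ A, ∀ b ∈ Aᶜ, ¬ G.Adj a b) ∨
   (∀ a ∈ A, ∀ b ∈ Aᶜ, P a ≠ P b → G.Adj a b) ∨
   (∀ a ∈ A, ∀ b ∈ Aᶜ, (G.Adj a b ↔ (P a = true ∧ P b = false))) ∨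
   (∀ a ∈ A, ∀ b ∈ Aᶜ, (G.Adj a b ↔ (P a = false ∧ P b = true))))

/-!
Columns of the Z-grid alternate in parity along every edge, and across an empty column `c`
a vertex left of `c` is adjacent to a vertex right of `c` exactly when the first lies in an
even column and the second in an odd one (1-indexed). A prime graph is connected, so its
bipartition agrees with column parity up to swapping the sides; an empty column between
occupied ones would then split the graph as a skew join.
-/

namespace SimpleGraph

variable {V : Type*} {G : SimpleGraph V}

theorem Reachable.xor_eq_of_adj_ne {f g : V → Bool} (hf : ∀ u v, G.Adj u v → f u ≠ f v)
    (hg : ∀ u v, G.Adj u v → g u ≠ g v) {u v : V} (h : G.Reachable u v) :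
    xor (f u) (g u) = xor (f v) (g v) := by
  obtain ⟨w⟩ := h
  induction w with
  | nil => rfl
  | cons hadj _ ih =>
    rw [← ih, Bool.eq_not_of_ne (hf _ _ hadj).symm, Bool.eq_not_of_ne (hg _ _ hadj).symm,
      Bool.not_xor_not]

theorem Preconnected.eq_or_eq_not_of_adj_ne (hG : G.Preconnected) {f g : V → Bool}
    (hf : ∀ u v, G.Adj u v → f u ≠ f v) (hg : ∀ u v, G.Adj u v → g u ≠ g v) :
    (∀ v, f v = g v) ∨ (∀ v, f v = !g v) := by
  rcases isEmpty_or_nonempty V with hV | ⟨⟨v₀⟩⟩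
  · exact .inl fun v => isEmptyElim v
  have hconst v := (hG v₀ v).xor_eq_of_adj_ne hf hg
  cases h : xor (f v₀) (g v₀)
  · exact .inl fun v => by simpa using (hconst v).symm.trans h
  · exact .inr fun v => Bool.eq_not_of_ne (by simpa using (hconst v).symm.trans h)

theorem preconnected_of_forall_not_isCanonicalSplit {P : V → Bool}
    (hprime : ∀ A : Set V, ¬ IsCanonicalSplit G P A) : G.Preconnected := by
  intro u v
  by_contra huv
  refine hprime {w | G.Reachable u w} ⟨⟨u, .refl u⟩, ⟨v, huv⟩, .inl ?_⟩
  exact fun a ha b hb hab => hb (ha.trans hab.reachable)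

theorem isCanonicalSplit_of_adj_iff {P q : V → Bool} {A : Set V} (hA : A.Nonempty)
    (hAc : Aᶜ.Nonempty) (hadj : ∀ a ∈ A, ∀ b ∈ Aᶜ, G.Adj a b ↔ q a = true ∧ q b = false)
    (hPq : (∀ v, P v = q v) ∨ (∀ v, P v = !q v)) : IsCanonicalSplit G P A := by
  refine ⟨hA, hAc, .inr (.inr ?_)⟩
  rcases hPq with hPq | hPq
  · exact .inl fun a ha b hb => by simpa [hPq] using hadj a ha b hb
  · exact .inr fun a ha b hb => by simpa [hPq] using hadj a ha b hb

end SimpleGraph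

namespace Zgrid

variable {n k : ℕ} {u v : Fin n × Fin k}

theorem even_fst_iff_odd_of_adj (h : (Zgrid n k).Adj u v) : Even u.1.val ↔ Odd v.1.val := by
  simp only [Zgrid, SimpleGraph.fromRel_adj, Zrel, Nat.even_iff, Nat.odd_iff] at h ⊢
  omega

theorem adj_iff_of_add_two_le (h : u.1.val + 2 ≤ v.1.val) :
    (Zgrid n k).Adj u v ↔ Odd u.1.val ∧ Even v.1.val := by
  have hne : u ≠ v := fun huv => by rw [huv] at h; omega
  simp only [Zgrid, SimpleGraph.fromRel_adj, Zrel, Nat.even_iff, Nat.odd_iff, ne_eq, hne,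
    not_false_eq_true, true_and]
  omega

end Zgrid

/-- if `G` is a canonically prime bipartite graph (no vertex
subset splits it as a disjoint union, join or skew join) and φ is an
induced-subgraph embedding of `G` into the Z-grid `Z_{n,k}`, then the set of
columns of `Z_{n,k}` meeting the image of φ is a set of consecutive integers
(it is convex: any column between two occupied columns is occupied). -/
theorem prime_embedding_consecutive_columns {V : Type*} (G : SimpleGraph V)
    (P : V → Bool) (hbip : ∀ a b, G.Adj a b → P a ≠ P b)
    (hprime : ∀ A : Set V, ¬ IsCanonicalSplit G P A)
    (n k : ℕ) (φ : G ↪g Zgrid n k) :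
    ∀ c₁ c₂ c₃ : Fin n, c₁ ≤ c₂ → c₂ ≤ c₃ →
      (∃ v, (φ v).1 = c₁) → (∃ v, (φ v).1 = c₃) → ∃ v, (φ v).1 = c₂ := by
  rintro c₁ c₂ c₃ h₁₂ h₂₃ ⟨v₁, rfl⟩ ⟨v₃, rfl⟩
  by_contra! hgap
  set A : Set V := {v | (φ v).1 < c₂}
  have hcross : ∀ a ∈ A, ∀ b ∈ Aᶜ, (φ a).1.val + 2 ≤ (φ b).1.val := by
    intro a ha b hb
    have := Fin.val_ne_of_ne (hgap b)
    simp only [A, Set.mem_compl_iff, Set.mem_ofPred_eq, not_lt, Fin.lt_def] at ha hb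
    omega
  refine hprime A <| SimpleGraph.isCanonicalSplit_of_adj_iff
    (q := fun v => decide (Odd (φ v).1.val)) ⟨v₁, ?_⟩ ⟨v₃, ?_⟩ (fun a ha b hb => ?_) ?_
  · exact lt_of_le_of_ne h₁₂ (hgap v₁)
  · exact not_lt.2 h₂₃
  · rw [← φ.map_adj_iff, Zgrid.adj_iff_of_add_two_le (hcross a ha b hb)]
    simp
  · refine (SimpleGraph.preconnected_of_forall_not_isCanonicalSplit hprime).eq_or_eq_not_of_adj_ne
      hbip fun a b hab => ?_
    simpa [← Nat.not_odd_iff_even, not_iff] using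
      Zgrid.even_fst_iff_odd_of_adj (φ.map_adj_iff.2 hab)
end

section
/- Every Z-grid Z_{n,k} is a bichain graph: taking the bipartition into vertices of odd columns and vertices of even columns, each part splits into two chains. -/
set_option maxHeartbeats 1000000


/-- Arithmetic (0-indexed, omega-friendly) version of `Zrel`. -/
private def ZR (a b c d : ℕ) : Prop :=
  (a % 2 = 0 ∧ c = a + 1 ∧ d < b) ∨
  (a % 2 = 1 ∧ c = a + 1 ∧ b ≤ d) ∨
  (a % 2 = 1 ∧ c % 2 = 0 ∧ a + 3 ≤ c)

private lemma zrel_iff (a b c d : ℕ) :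
    Zrel (a + 1) (b + 1) (c + 1) (d + 1) ↔ ZR a b c d := by
  simp only [Zrel, ZR, Nat.odd_iff, Nat.even_iff]
  omega

private lemma adj_iff {n k : ℕ} (u v : Fin n × Fin k) :
    (Zgrid n k).Adj u v ↔ u ≠ v ∧
      (ZR (u.1 : ℕ) (u.2 : ℕ) (v.1 : ℕ) (v.2 : ℕ) ∨
       ZR (v.1 : ℕ) (v.2 : ℕ) (u.1 : ℕ) (u.2 : ℕ)) := by
  rw [Zgrid, SimpleGraph.fromRel_adj, zrel_iff, zrel_iff]

private lemma sub_of {n k : ℕ} (u v : Fin n × Fin k)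
    (H : ∀ a b : ℕ,
      (ZR (u.1 : ℕ) (u.2 : ℕ) a b ∨ ZR a b (u.1 : ℕ) (u.2 : ℕ)) →
      (a ≠ (v.1 : ℕ) ∧
        (ZR (v.1 : ℕ) (v.2 : ℕ) a b ∨ ZR a b (v.1 : ℕ) (v.2 : ℕ)))) :
    (Zgrid n k).neighborSet u ⊆ (Zgrid n k).neighborSet v := by
  intro w hw
  rw [SimpleGraph.mem_neighborSet, adj_iff] at hw ⊢
  obtain ⟨h1, h2⟩ := H (w.1 : ℕ) (w.2 : ℕ) hw.2
  refine ⟨fun h => h1 ?_, h2⟩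
  rw [h]

/-- every Z-grid `Z_{n,k}` is a bichain graph: with the
bipartition into odd-column and even-column vertices, each part can be split
into two chains: there is a two-colouring `f` of the vertices such that any
two vertices in the same part and with the same colour have neighbourhoods
comparable under inclusion. (The bipartition itself is also recorded: every
edge joins an odd column to an even column.) -/
theorem Zgrid_bichain (n k : ℕ) :
    (∀ u v : Fin n × Fin k, (Zgrid n k).Adj u v →
        ((u.1 : ℕ)) % 2 ≠ ((v.1 : ℕ)) % 2) ∧
    ∃ f : Fin n × Fin k → Bool,
      ∀ u v : Fin n × Fin k, ((u.1 : ℕ)) % 2 = ((v.1 : ℕ)) % 2 → f u = f v →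
        ((Zgrid n k).neighborSet u ⊆ (Zgrid n k).neighborSet v ∨
         (Zgrid n k).neighborSet v ⊆ (Zgrid n k).neighborSet u) := by
  constructor
  · intro u v h
    rw [adj_iff] at h
    have h2 := h.2
    simp only [ZR] at h2
    rcases h2 with (h|h|h)|(h|h|h) <;> omega
  · refine ⟨fun u => decide ((u.1 : ℕ) % 4 < 2), fun u v hp hf => ?_⟩
    simp only [decide_eq_decide] at hf
    have h4 : (u.1 : ℕ) % 4 = (v.1 : ℕ) % 4 := by omega
    rcases Nat.lt_trichotomy (u.1 : ℕ) (v.1 : ℕ) with hlt | heq | hlt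
    · -- u.1 + 4 ≤ v.1
      have hfar : (u.1 : ℕ) + 4 ≤ (v.1 : ℕ) := by omega
      rcases Nat.even_or_odd (u.1 : ℕ) with he | he
      · rw [Nat.even_iff] at he
        left
        apply sub_of
        intro a b hr
        simp only [ZR] at hr ⊢
        rcases hr with (h|h|h)|(h|h|h) <;> constructor <;> omega
      · rw [Nat.odd_iff] at he
        right
        apply sub_of
        intro a b hr
        simp only [ZR] at hr ⊢
        rcases hr with (h|h|h)|(h|h|h) <;> constructor <;> omega
    · -- same column
      rcases Nat.le_total (u.2 : ℕ) (v.2 : ℕ) with hj | hj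
      · rcases Nat.even_or_odd (u.1 : ℕ) with he | he
        · rw [Nat.even_iff] at he
          left
          apply sub_of
          intro a b hr
          simp only [ZR] at hr ⊢
          rcases hr with (h|h|h)|(h|h|h) <;> constructor <;> omega
        · rw [Nat.odd_iff] at he
          right
          apply sub_of
          intro a b hr
          simp only [ZR] at hr ⊢
          rcases hr with (h|h|h)|(h|h|h) <;> constructor <;> omega
      · rcases Nat.even_or_odd (u.1 : ℕ) with he | he
        · rw [Nat.even_iff] at he
          right
          apply sub_of
          intro a b hr
          simp only [ZR] at hr ⊢
          rcases hr with (h|h|h)|(h|h|h) <;> constructor <;> omega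
        · rw [Nat.odd_iff] at he
          left
          apply sub_of
          intro a b hr
          simp only [ZR] at hr ⊢
          rcases hr with (h|h|h)|(h|h|h) <;> constructor <;> omega
    · -- v.1 + 4 ≤ u.1
      have hfar : (v.1 : ℕ) + 4 ≤ (u.1 : ℕ) := by omega
      rcases Nat.even_or_odd (u.1 : ℕ) with he | he
      · rw [Nat.even_iff] at he
        right
        apply sub_of
        intro a b hr
        simp only [ZR] at hr ⊢
        rcases hr with (h|h|h)|(h|h|h) <;> constructor <;> omega
      · rw [Nat.odd_iff] at he
        left
        apply sub_of
        intro a b hr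
        simp only [ZR] at hr ⊢
        rcases hr with (h|h|h)|(h|h|h) <;> constructor <;> omega
end
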